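/- Let T, N, B₁, B₂ : ℝ → ℝ⁴ be a Frenet frame of a partially null curve in E₁⁴ satisfying T' = κN, N' = -κT + τB₁, B₁' = 0, B₂' = -τN, with κ, τ smooth and nowhere zero. If there exists a constant vector U, not parallel to B₁, with g(B₂(s), U) constant (3-type slant helix), then τ/κ is constant, and consequently the curve is a k-type slant helix for every k ∈ {0, 1, 2, 3}. -/
import Mathlib

noncomputable def g (v w : Fin 4 → ℝ) : ℝ :=
  -(v 0 * w 0) + v 1 * w 1 + v 2 * w 2 + v 3 * w 3

lemma g_smul_left (r : ℝ) (v w : Fin 4 → ℝ) : g (r • v) w = r * g v w := by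
  simp [g, Pi.smul_apply, smul_eq_mul]; ring

lemma g_add_left (v v' w : Fin 4 → ℝ) : g (v + v') w = g v w + g v' w := by
  simp [g, Pi.add_apply]; ring

lemma g_zero_left (w : Fin 4 → ℝ) : g 0 w = 0 := by simp [g]

lemma g_sub_right (v w w' : Fin 4 → ℝ) : g v (w - w') = g v w - g v w' := by
  simp [g, Pi.sub_apply]; ring

lemma g_smul_right (r : ℝ) (v w : Fin 4 → ℝ) : g v (r • w) = r * g v w := by
  simp [g, Pi.smul_apply, smul_eq_mul]; ring

lemma g_symm (v w : Fin 4 → ℝ) : g v w = g w v := by simp [g]; ring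

lemma gderiv (U : Fin 4 → ℝ) {F : ℝ → Fin 4 → ℝ} {F' : Fin 4 → ℝ} {s : ℝ}
    (h : HasDerivAt F F' s) : HasDerivAt (fun t => g (F t) U) (g F' U) s := by
  have hc := hasDerivAt_pi.1 h
  have h2 : HasDerivAt
      (fun t => -(F t 0 * U 0) + F t 1 * U 1 + F t 2 * U 2 + F t 3 * U 3)
      (-(F' 0 * U 0) + F' 1 * U 1 + F' 2 * U 2 + F' 3 * U 3) s :=
    ((((hc 0).mul_const (U 0)).neg.add ((hc 1).mul_const (U 1))).add
      ((hc 2).mul_const (U 2))).add ((hc 3).mul_const (U 3))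
  simpa [g] using h2

lemma ortho_zero (e0 e1 e2 e3 W : Fin 4 → ℝ)
    (h00 : g e0 e0 = 1) (h11 : g e1 e1 = 1) (h22 : g e2 e2 = 0) (h33 : g e3 e3 = 0)
    (h23 : g e2 e3 = 1) (h01 : g e0 e1 = 0) (h02 : g e0 e2 = 0) (h03 : g e0 e3 = 0)
    (h12 : g e1 e2 = 0) (h13 : g e1 e3 = 0)
    (w0 : g e0 W = 0) (w1 : g e1 W = 0) (w2 : g e2 W = 0) (w3 : g e3 W = 0) : W = 0 := by
  classical
  set E : Fin 4 → Fin 4 → ℝ := ![e0, e1, e2, e3] with hE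
  set M : Matrix (Fin 4) (Fin 4) ℝ :=
    Matrix.of (fun i j => if j = 0 then -(E i j) else E i j) with hM
  have hmul : ∀ (v : Fin 4 → ℝ) (i : Fin 4), M.mulVec v i = g (E i) v := by
    intro v i
    simp [hM, Matrix.mulVec, dotProduct, Fin.sum_univ_four, g]
  have hsurj : Function.Surjective M.mulVecLin := by
    intro y
    set v : Fin 4 → ℝ := y 0 • e0 + y 1 • e1 + y 3 • e2 + y 2 • e3 with hv
    have k0 : g e0 v = y 0 := by
      simp only [hv, g, Pi.add_apply, Pi.smul_apply, smul_eq_mul]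
      simp only [g] at h00 h01 h02 h03
      linear_combination y 0 * h00 + y 1 * h01 + y 3 * h02 + y 2 * h03
    have k1 : g e1 v = y 1 := by
      simp only [hv, g, Pi.add_apply, Pi.smul_apply, smul_eq_mul]
      simp only [g] at h01 h11 h12 h13
      linear_combination y 0 * h01 + y 1 * h11 + y 3 * h12 + y 2 * h13
    have k2 : g e2 v = y 2 := by
      simp only [hv, g, Pi.add_apply, Pi.smul_apply, smul_eq_mul]
      simp only [g] at h02 h12 h22 h23
      linear_combination y 0 * h02 + y 1 * h12 + y 3 * h22 + y 2 * h23
    have k3 : g e3 v = y 3 := by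
      simp only [hv, g, Pi.add_apply, Pi.smul_apply, smul_eq_mul]
      simp only [g] at h03 h13 h23 h33
      linear_combination y 0 * h03 + y 1 * h13 + y 3 * h23 + y 2 * h33
    refine ⟨v, ?_⟩
    funext i
    rw [Matrix.mulVecLin_apply, hmul]
    fin_cases i <;> simp only [hE, Matrix.cons_val_zero, Matrix.cons_val_one,
      Matrix.head_cons, Fin.isValue] <;>
      first
        | exact k0
        | exact k1
        | exact k2
        | exact k3
  have hinj : Function.Injective M.mulVecLin :=
    LinearMap.injective_iff_surjective.2 hsurj
  have hW : M.mulVecLin W = M.mulVecLin 0 := by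
    funext i
    rw [Matrix.mulVecLin_apply, Matrix.mulVecLin_apply, hmul, hmul]
    have gz : ∀ u : Fin 4 → ℝ, g u 0 = 0 := by intro u; simp [g]
    fin_cases i <;> simp only [hE, Matrix.cons_val_zero, Matrix.cons_val_one,
      Matrix.head_cons, Fin.isValue, gz] <;>
      first
        | exact w0
        | exact w1
        | exact w2
        | exact w3
  exact hinj hW

theorem stmt5
    (T N B₁ B₂ : ℝ → Fin 4 → ℝ) (κ τ : ℝ → ℝ)
    (hκ : ContDiff ℝ (⊤ : ℕ∞) κ) (hτ : ContDiff ℝ (⊤ : ℕ∞) τ)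
    (hκ0 : ∀ s, κ s ≠ 0) (hτ0 : ∀ s, τ s ≠ 0)
    (hT : ∀ s, HasDerivAt T (κ s • N s) s)
    (hN : ∀ s, HasDerivAt N ((-κ s) • T s + τ s • B₁ s) s)
    (hB₁ : ∀ s, HasDerivAt B₁ (0 : Fin 4 → ℝ) s)
    (hB₂ : ∀ s, HasDerivAt B₂ ((-τ s) • N s) s)
    (hTT : ∀ s, g (T s) (T s) = 1) (hNN : ∀ s, g (N s) (N s) = 1)
    (hB₁B₁ : ∀ s, g (B₁ s) (B₁ s) = 0) (hB₂B₂ : ∀ s, g (B₂ s) (B₂ s) = 0)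
    (hB₁B₂ : ∀ s, g (B₁ s) (B₂ s) = 1)
    (hTN : ∀ s, g (T s) (N s) = 0) (hTB₁ : ∀ s, g (T s) (B₁ s) = 0)
    (hTB₂ : ∀ s, g (T s) (B₂ s) = 0) (hNB₁ : ∀ s, g (N s) (B₁ s) = 0)
    (hNB₂ : ∀ s, g (N s) (B₂ s) = 0)
    (U : Fin 4 → ℝ) (hU0 : U ≠ 0) (hUB₁ : ∀ r : ℝ, U ≠ r • B₁ 0)
    (c : ℝ) (hUc : ∀ s, g (B₂ s) U = c) :
    (∃ C : ℝ, ∀ s, τ s / κ s = C) ∧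
    (∃ V : Fin 4 → ℝ, V ≠ 0 ∧ ∃ a : ℝ, ∀ s, g (T s) V = a) ∧
    (∃ V : Fin 4 → ℝ, V ≠ 0 ∧ ∃ a : ℝ, ∀ s, g (N s) V = a) ∧
    (∃ V : Fin 4 → ℝ, V ≠ 0 ∧ ∃ a : ℝ, ∀ s, g (B₁ s) V = a) ∧
    (∃ V : Fin 4 → ℝ, V ≠ 0 ∧ ∃ a : ℝ, ∀ s, g (B₂ s) V = a) := by
  -- Step 1 : g (N s) U = 0
  have hNU : ∀ s, g (N s) U = 0 := by
    intro s
    have h1 : HasDerivAt (fun t => g (B₂ t) U) (g ((-τ s) • N s) U) s := gderiv U (hB₂ s)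
    have h2 : HasDerivAt (fun t => g (B₂ t) U) 0 s := by
      have he : (fun t => g (B₂ t) U) = fun _ => c := funext hUc
      rw [he]; exact hasDerivAt_const s c
    have h3 : g ((-τ s) • N s) U = 0 := h1.unique h2
    rw [g_smul_left] at h3
    rcases mul_eq_zero.1 h3 with h | h
    · exact absurd (neg_eq_zero.1 h) (hτ0 s)
    · exact h
  -- Step 2 : g (B₁ s) U constant
  have hB₁U : ∀ s, g (B₁ s) U = g (B₁ 0) U := by
    have hd : ∀ s, HasDerivAt (fun t => g (B₁ t) U) 0 s := by
      intro s
      have := gderiv U (hB₁ s)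
      rwa [g_zero_left] at this
    intro s
    exact is_const_of_deriv_eq_zero (fun x => (hd x).differentiableAt)
      (fun x => (hd x).deriv) s 0
  -- Step 3 : g (T s) U constant
  have hTU : ∀ s, g (T s) U = g (T 0) U := by
    have hd : ∀ s, HasDerivAt (fun t => g (T t) U) 0 s := by
      intro s
      have := gderiv U (hT s)
      rwa [g_smul_left, hNU s, mul_zero] at this
    intro s
    exact is_const_of_deriv_eq_zero (fun x => (hd x).differentiableAt)
      (fun x => (hd x).deriv) s 0
  set a := g (T 0) U with ha
  set b := g (B₁ 0) U with hb
  -- Step 4 : κ a = τ b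
  have key : ∀ s, κ s * a = τ s * b := by
    intro s
    have h1 : HasDerivAt (fun t => g (N t) U) (g ((-κ s) • T s + τ s • B₁ s) U) s :=
      gderiv U (hN s)
    have h2 : HasDerivAt (fun t => g (N t) U) 0 s := by
      have he : (fun t => g (N t) U) = fun _ => 0 := funext hNU
      rw [he]; exact hasDerivAt_const s 0
    have h3 : g ((-κ s) • T s + τ s • B₁ s) U = 0 := h1.unique h2
    rw [g_add_left, g_smul_left, g_smul_left, hTU s, hB₁U s] at h3
    linarith
  -- Step 5 : b ≠ 0
  have hbne : b ≠ 0 := by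
    intro hb0
    have ha0 : a = 0 := by
      have := key 0
      rw [hb0, mul_zero] at this
      exact (mul_eq_zero.1 this).resolve_left (hκ0 0)
    have hW : U - c • B₁ 0 = 0 := by
      apply ortho_zero (T 0) (N 0) (B₁ 0) (B₂ 0) _ (hTT 0) (hNN 0) (hB₁B₁ 0) (hB₂B₂ 0)
        (hB₁B₂ 0) (hTN 0) (hTB₁ 0) (hTB₂ 0) (hNB₁ 0) (hNB₂ 0)
      · rw [g_sub_right, g_smul_right, hTB₁ 0, mul_zero, sub_zero, hTU 0, ha0]
      · rw [g_sub_right, g_smul_right, hNB₁ 0, mul_zero, sub_zero, hNU 0]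
      · rw [g_sub_right, g_smul_right, hB₁B₁ 0, mul_zero, sub_zero, hB₁U 0, hb0]
      · rw [g_sub_right, g_smul_right, g_symm (B₂ 0) (B₁ 0), hB₁B₂ 0, mul_one, hUc 0,
          sub_self]
    exact hUB₁ c (sub_eq_zero.1 hW)
  refine ⟨⟨a / b, fun s => ?_⟩, ⟨U, hU0, a, hTU⟩, ⟨U, hU0, 0, hNU⟩,
    ⟨U, hU0, b, hB₁U⟩, ⟨U, hU0, c, hUc⟩⟩
  rw [div_eq_div_iff (hκ0 s) hbne]
  linarith [key s]
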